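/- Let n ≥ 1, let I, J ⊆ {1,…,n} be disjoint subsets with I nonempty, and let I₀ ⊆ I. Suppose a ∈ ℚⁿ satisfies a_i > 0 for all i ∈ I ∪ J, a_i = 0 for all i ∉ I ∪ J, ∑_{i∈I} a_i > 1 and ∑_{i∈I₀} a_i < 1. Then there exist positive rational numbers (t_i)_{i∈I} with ∑_{i∈I} t_i = 1 and positive rational numbers (s_i)_{i ∈ J ∪ (I \ I₀)} such that a = ∑_{i∈I} t_i e_i + ∑_{i ∈ J ∪ (I \ I₀)} s_i e_i. -/
import Mathlib

lemma sum_single_apply {n : ℕ} (S : Finset (Fin n)) (f : Fin n → ℚ) (j : Fin n) :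
    (∑ i ∈ S, f i • (Pi.single i (1 : ℚ) : Fin n → ℚ)) j
      = if j ∈ S then f j else 0 := by
  rw [Finset.sum_apply]
  simp only [Pi.smul_apply, Pi.single_apply, smul_eq_mul, mul_ite, mul_one, mul_zero]
  rw [Finset.sum_ite_eq S j f]

/-- If `a ∈ ℚⁿ` satisfies `a_i > 0` on `I ∪ J`, `a_i = 0` off `I ∪ J`, `∑_{i∈I} a_i > 1` and
`∑_{i∈I₀} a_i < 1`, then `a` decomposes as `∑_{i∈I} t_i e_i + ∑_{i∈J∪(I\I₀)} s_i e_i` with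
positive rational coefficients, `∑_{i∈I} t_i = 1`. -/
theorem exists_decomposition (n : ℕ) (hn : 1 ≤ n) (I J : Finset (Fin n))
    (hIJ : Disjoint I J) (hI : I.Nonempty) (I₀ : Finset (Fin n)) (hI₀ : I₀ ⊆ I)
    (a : Fin n → ℚ)
    (hpos : ∀ i ∈ I ∪ J, 0 < a i)
    (hzero : ∀ i ∉ I ∪ J, a i = 0)
    (hIsum : 1 < ∑ i ∈ I, a i)
    (hI₀sum : ∑ i ∈ I₀, a i < 1) :
    ∃ t s : Fin n → ℚ,
      (∀ i ∈ I, 0 < t i) ∧ (∑ i ∈ I, t i = 1) ∧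
      (∀ i ∈ J ∪ (I \ I₀), 0 < s i) ∧
      a = (∑ i ∈ I, t i • (Pi.single i (1 : ℚ) : Fin n → ℚ))
          + ∑ i ∈ J ∪ (I \ I₀), s i • (Pi.single i (1 : ℚ) : Fin n → ℚ) := by
  set A₀ : ℚ := ∑ i ∈ I₀, a i with hA₀
  set D : ℚ := ∑ i ∈ I \ I₀, a i with hD
  have hsplit : A₀ + D = ∑ i ∈ I, a i := by
    rw [hA₀, hD, add_comm]
    exact Finset.sum_sdiff hI₀
  have hDpos : 0 < D := by linarith
  set c : ℚ := (1 - A₀) / D with hc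
  have hcpos : 0 < c := div_pos (by linarith) hDpos
  have hclt : c < 1 := by
    rw [div_lt_one hDpos]; linarith
  set t : Fin n → ℚ := fun i => if i ∈ I₀ then a i else c * a i with ht
  set s : Fin n → ℚ := fun i => if i ∈ I then (1 - c) * a i else a i with hs
  refine ⟨t, s, ?_, ?_, ?_, ?_⟩
  · intro i hi
    have hai : 0 < a i := hpos i (Finset.mem_union_left _ hi)
    by_cases h : i ∈ I₀ <;> simp [ht, h] <;> positivity
  · have h1 : ∑ i ∈ I, t i = ∑ i ∈ I₀, t i + ∑ i ∈ I \ I₀, t i := by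
      rw [add_comm]; exact (Finset.sum_sdiff hI₀).symm
    have h2 : ∑ i ∈ I₀, t i = A₀ := Finset.sum_congr rfl (fun i hi => by simp [ht, hi])
    have h3 : ∑ i ∈ I \ I₀, t i = c * D := by
      rw [hD, Finset.mul_sum]
      refine Finset.sum_congr rfl (fun i hi => ?_)
      have : i ∉ I₀ := (Finset.mem_sdiff.mp hi).2
      simp [ht, this]
    rw [h1, h2, h3, hc, div_mul_cancel₀ _ (ne_of_gt hDpos)]; ring
  · intro i hi
    rcases Finset.mem_union.mp hi with h | h
    · have : i ∉ I := fun hiI => (Finset.disjoint_left.mp hIJ hiI) h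
      have hai : 0 < a i := hpos i (Finset.mem_union_right _ h)
      simp [hs, this, hai]
    · have hiI : i ∈ I := (Finset.mem_sdiff.mp h).1
      have hai : 0 < a i := hpos i (Finset.mem_union_left _ hiI)
      simp only [hs, hiI, if_true]
      have : 0 < 1 - c := by linarith
      positivity
  · funext j
    rw [Pi.add_apply, sum_single_apply, sum_single_apply]
    by_cases hjI : j ∈ I
    · have hjJ : j ∉ J := Finset.disjoint_left.mp hIJ hjI
      by_cases hj0 : j ∈ I₀
      · have : j ∉ J ∪ (I \ I₀) := by simp [hjJ, hj0]
        simp [hjI, this, ht, hj0]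
      · have : j ∈ J ∪ (I \ I₀) := by simp [hjI, hj0]
        simp only [hjI, if_true, this, ht, hs, hj0, if_false]
        ring
    · by_cases hjJ : j ∈ J
      · have : j ∈ J ∪ (I \ I₀) := Finset.mem_union_left _ hjJ
        simp [hjI, this, hs]
      · have h0 : a j = 0 := hzero j (by simp [hjI, hjJ])
        have : j ∉ J ∪ (I \ I₀) := by simp [hjI, hjJ]
        simp [hjI, this, h0]
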